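/- arXiv:1210.3048 — 2 statements merged into one kernel-verified Lean document; each statement's English description precedes it below -/
import Mathlib

section
/- Let X be a shift space over a finite alphabet 𝒜 and let a ∈ 𝒜. If there exists N ∈ ℕ such that a^N ∉ B(X), then X is flow equivalent to X^{a↦aa}; moreover the 1-block code that fixes every letter of 𝒜 and sends ◇ to a restricts to a conjugacy from X^{a↦a◇} onto X^{a↦aa}. -/
/-! Since `X` contains no run `a^N`, every position of a point of `X^{a↦a◇}` has a letter
other than `a` and `◇` somewhere to its left. Starting there, the rule "`◇` occurs exactly after
`a`" reconstructs the point from its image in `X^{a↦aa}` letter by letter to the right, so the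
1-block code `◇ ↦ a` is injective on `X^{a↦a◇}`. As `X^{a↦a◇}` is compact, the code is a
homeomorphism onto its image, hence a conjugacy, and `X ∼ X^{a↦a◇} ≅ X^{a↦aa}`. -/

namespace SymbolicDynamics

/-! ### Basic symbolic dynamics set-up

All shift spaces are realized inside the full shift over the countable ambient
alphabet `ℕ`; an actual shift space uses only a finite subset of `ℕ` as its
alphabet.  This gives a uniform setting in which shift spaces over varying
finite alphabets can be compared (as required by flow equivalence). -/

/-- Biinfinite sequences over the ambient alphabet `ℕ`. -/
abbrev Seq : Type := ℤ → ℕ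

/-- The shift map `σ`, `(σ x) i = x (i+1)`. -/
def shift (x : Seq) : Seq := fun i => x (i + 1)

/-- The word `x_i x_{i+1} ⋯ x_{i+n-1}` of length `n` occurring in `x` at position `i`. -/
def wordAt (x : Seq) (i : ℤ) (n : ℕ) : List ℕ :=
  List.ofFn fun k : Fin n => x (i + (k.val : ℤ))

/-- `w` occurs as a factor of the biinfinite sequence `x`. -/
def FactorOf (w : List ℕ) (x : Seq) : Prop := ∃ i : ℤ, wordAt x i w.length = w

/-- The language `B(X)`: all finite words occurring in points of `X`. -/
def lang (X : Set Seq) : Set (List ℕ) := {w | ∃ x ∈ X, FactorOf w x}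

/-- `X_F`: the set of biinfinite sequences containing no word of `F` as a factor. -/
def XF (F : Set (List ℕ)) : Set Seq := {x | ∀ w ∈ F, ¬ FactorOf w x}

/-- `X` is a shift space over the finite alphabet `A ⊆ ℕ`: `X` is a closed,
shift-invariant set of biinfinite sequences with letters in `A`. -/
def IsSubshift (A : Set ℕ) (X : Set Seq) : Prop :=
  A.Finite ∧ IsClosed X ∧ (∀ x, x ∈ X ↔ shift x ∈ X) ∧ ∀ x ∈ X, ∀ i, x i ∈ A

/-- `X` is a shift space (over some finite alphabet). -/
def IsShiftSpace (X : Set Seq) : Prop := ∃ A : Set ℕ, IsSubshift A X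

/-- A conjugacy between `X` and `Y`: a shift-commuting homeomorphism. -/
def Conjugate (X Y : Set Seq) : Prop :=
  ∃ φ : ↥X ≃ₜ ↥Y, ∀ x y : ↥X, shift x.1 = y.1 → shift (φ x).1 = (φ y).1

/-- The (globally defined) map `φ` restricts to a conjugacy from `X` onto `Y`:
there is a shift-commuting homeomorphism `X → Y` whose underlying map is `φ`. -/
def ConjugacyVia (φ : Seq → Seq) (X Y : Set Seq) : Prop :=
  ∃ h : ↥X ≃ₜ ↥Y, (∀ x : ↥X, (h x).1 = φ x.1) ∧
    ∀ x y : ↥X, shift x.1 = y.1 → shift (h x).1 = (h y).1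

/-- `y` is obtained from `x` by replacing every occurrence of the letter `a` by
`a ◇` (with `◇ = d`), possibly followed by one shift.  The reindexing function
`p` records the position in `y` of the `k`-th letter of `x`. -/
def ExpandsTo (a d : ℕ) (x y : Seq) : Prop :=
  ∃ p : ℤ → ℤ, (p 0 = 0 ∨ p 0 = -1) ∧
    (∀ k, p (k + 1) = p k + if x k = a then 2 else 1) ∧
    (∀ k, y (p k) = x k) ∧
    ∀ k, x k = a → y (p k + 1) = d

/-- The symbol expansion `X^{a ↦ a◇}` with `◇ = d` (a symbol not in the alphabet
of `X`): all sequences obtained from points of `X` by replacing every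
occurrence of `a` by `a◇`, together with all shifts of such sequences. -/
def symbolExpansion (X : Set Seq) (a d : ℕ) : Set Seq := {y | ∃ x ∈ X, ExpandsTo a d x y}

/-- Flow equivalence: the smallest equivalence relation on shift spaces (over
varying finite alphabets) containing conjugacy and relating every shift space
`X` to its symbol expansion `X^{a ↦ a◇}` for every letter `a` of the alphabet of
`X` and every new symbol `◇` (Parry–Sullivan). -/
inductive FlowEquiv : Set Seq → Set Seq → Prop
  | of_conjugate {X Y : Set Seq} (hX : IsShiftSpace X) (hY : IsShiftSpace Y)
      (h : Conjugate X Y) : FlowEquiv X Y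
  | expand {X : Set Seq} {A : Set ℕ} (a d : ℕ) (hX : IsSubshift A X)
      (ha : a ∈ A) (hd : d ∉ A) : FlowEquiv X (symbolExpansion X a d)
  | symm {X Y : Set Seq} : FlowEquiv X Y → FlowEquiv Y X
  | trans {X Y Z : Set Seq} : FlowEquiv X Y → FlowEquiv Y Z → FlowEquiv X Z

/-- The full shift on `k` symbols (realized on the alphabet `{0, …, k-1}`). -/
def fullShift (k : ℕ) : Set Seq := {x | ∀ i, x i < k}

/-- `X` is a shift of finite type. -/
def IsSFT (X : Set Seq) : Prop := ∃ F : Set (List ℕ), F.Finite ∧ X = XF F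

/-- `X` is an `n`-step shift of finite type:  `X = X_F` for a finite set `F` of
forbidden words of length `n+1`. -/
def IsNStepSFT (X : Set Seq) (n : ℕ) : Prop :=
  ∃ F : Set (List ℕ), F.Finite ∧ (∀ w ∈ F, w.length = n + 1) ∧ X = XF F

/-- Irreducibility of a shift space. -/
def IsIrreducibleShift (X : Set Seq) : Prop :=
  ∀ u ∈ lang X, ∀ w ∈ lang X, ∃ v ∈ lang X, u ++ v ++ w ∈ lang X

open Filter Topology

theorem shift_bijective : Function.Bijective shift := by
  refine ⟨fun u v h => funext fun i => ?_, fun y => ⟨fun i => y (i - 1), funext fun i => ?_⟩⟩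
  · simpa [shift] using congrFun h (i - 1)
  · simp [shift]

theorem IsSubshift.isCompact {A : Set ℕ} {X : Set Seq} (hX : IsSubshift A X) : IsCompact X :=
  (isCompact_univ_pi fun _ => hX.1.isCompact).of_isClosed_subset hX.2.1
    fun x hx i _ => hX.2.2.2 x hx i

theorem shift_translate (x : Seq) (m : ℤ) :
    shift (fun k => x (k + m)) = fun k => x (k + (m + 1)) :=
  funext fun k => congrArg x (by ring)

theorem IsSubshift.translate_mem_iff {A : Set ℕ} {X : Set Seq} (hX : IsSubshift A X)
    (x : Seq) (m : ℤ) : (fun k => x (k + m)) ∈ X ↔ x ∈ X := by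
  induction m using Int.induction_on with
  | zero => simp
  | succ m ih => rw [← ih, hX.2.2.1 (fun k => x (k + m)), shift_translate]
  | pred m ih =>
    rw [← ih, hX.2.2.1 (fun k => x (k + (-m - 1))), shift_translate, sub_add_cancel]

theorem IsSubshift.image {A B : Set ℕ} {X : Set Seq} {φ : Seq → Seq} (hX : IsSubshift A X)
    (hB : B.Finite) (hφ : Continuous φ) (hcomm : ∀ y, φ (shift y) = shift (φ y))
    (hφB : ∀ x ∈ X, ∀ i, φ x i ∈ B) : IsSubshift B (φ '' X) := by
  refine ⟨hB, (hX.isCompact.image hφ).isClosed, fun z => ⟨?_, ?_⟩, ?_⟩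
  · rintro ⟨x, hx, rfl⟩
    exact ⟨shift x, (hX.2.2.1 x).1 hx, hcomm x⟩
  · rintro ⟨x, hx, hxz⟩
    obtain ⟨x', rfl⟩ := shift_bijective.2 x
    exact ⟨x', (hX.2.2.1 x').2 hx, shift_bijective.1 (by rw [← hcomm, hxz])⟩
  · rintro _ ⟨x, hx, rfl⟩ i
    exact hφB x hx i

theorem conjugacyVia_image_of_injOn {φ : Seq → Seq} {Y : Set Seq} (hφ : Continuous φ)
    (hcomm : ∀ y, φ (shift y) = shift (φ y)) (hY : IsCompact Y) (hinj : Set.InjOn φ Y) :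
    ConjugacyVia φ Y (φ '' Y) := by
  have := isCompact_iff_compactSpace.mp hY
  let e := Equiv.Set.imageOfInjOn φ Y hinj
  have he : Continuous e := (hφ.comp continuous_subtype_val).subtype_mk _
  refine ⟨he.homeoOfEquivCompactToT2, fun _ => rfl, fun y y' h => ?_⟩
  change shift (φ y) = φ y'
  rw [← hcomm, h]

theorem ConjugacyVia.conjugate {φ : Seq → Seq} {X Y : Set Seq} (h : ConjugacyVia φ X Y) :
    Conjugate X Y :=
  let ⟨e, _, he⟩ := h
  ⟨e, he⟩

theorem exists_apply_le_lt_apply_succ {p : ℤ → ℤ} (hp : ∀ k, p k < p (k + 1)) (j : ℤ) :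
    ∃ k, p k ≤ j ∧ j < p (k + 1) := by
  refine Int.inductionOn' j (p 0) ⟨0, le_rfl, by simpa using hp 0⟩ ?_ ?_
  · rintro j - ⟨k, hk, hjk⟩
    rcases (Int.add_one_le_iff.2 hjk).lt_or_eq with h | h
    · exact ⟨k, by omega, h⟩
    · exact ⟨k + 1, h.ge, h ▸ hp (k + 1)⟩
  · rintro j - ⟨k, hk, hjk⟩
    rcases hk.lt_or_eq with h | h
    · exact ⟨k, by omega, by omega⟩
    · have := hp (k - 1)
      rw [sub_add_cancel] at this
      exact ⟨k - 1, by omega, by rw [sub_add_cancel]; omega⟩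

/-- The conditions of `ExpandsTo` without the normalisation `p 0 ∈ {0, -1}`. -/
structure IsExpansion (a d : ℕ) (x y : Seq) (p : ℤ → ℤ) : Prop where
  step : ∀ k, p (k + 1) = p k + if x k = a then 2 else 1
  val : ∀ k, y (p k) = x k
  marker : ∀ k, x k = a → y (p k + 1) = d

theorem expandsTo_iff {a d : ℕ} {x y : Seq} :
    ExpandsTo a d x y ↔ ∃ p, (p 0 = 0 ∨ p 0 = -1) ∧ IsExpansion a d x y p :=
  ⟨fun ⟨p, h0, h1, h2, h3⟩ => ⟨p, h0, h1, h2, h3⟩, fun ⟨p, h0, h1, h2, h3⟩ => ⟨p, h0, h1, h2, h3⟩⟩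

namespace IsExpansion

variable {a d : ℕ} {x y : Seq} {p : ℤ → ℤ}

theorem lt_succ (h : IsExpansion a d x y p) (k : ℤ) : p k < p (k + 1) := by
  rw [h.step]
  split <;> omega

theorem exists_eq_or_succ_eq (h : IsExpansion a d x y p) (j : ℤ) :
    ∃ k, p k = j ∨ (p k + 1 = j ∧ x k = a) := by
  obtain ⟨k, hk, hjk⟩ := exists_apply_le_lt_apply_succ h.lt_succ j
  have hstep := h.step k
  split_ifs at hstep with hxk <;> exact ⟨k, by omega⟩

theorem apply_eq_or_eq_marker (h : IsExpansion a d x y p) (j : ℤ) :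
    (∃ k, y j = x k) ∨ y j = d := by
  obtain ⟨k, rfl | ⟨rfl, hk⟩⟩ := h.exists_eq_or_succ_eq j
  · exact .inl ⟨k, h.val k⟩
  · exact .inr (h.marker k hk)

theorem translate (h : IsExpansion a d x y p) (m : ℤ) :
    IsExpansion a d (fun k => x (k + m)) y (fun k => p (k + m)) where
  step k := by rw [add_right_comm, h.step]
  val k := h.val (k + m)
  marker k := h.marker (k + m)

theorem shift (h : IsExpansion a d x y p) : IsExpansion a d x (shift y) (fun k => p k - 1) where
  step k := by rw [h.step]; ring
  val k := by simp [SymbolicDynamics.shift, h.val]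
  marker k hk := by simp [SymbolicDynamics.shift, h.marker k hk]

theorem of_shift (h : IsExpansion a d x (SymbolicDynamics.shift y) p) :
    IsExpansion a d x y (fun k => p k + 1) where
  step k := by rw [h.step]; ring
  val k := h.val k
  marker k hk := h.marker k hk

theorem succ_eq_marker_iff (h : IsExpansion a d x y p) (had : a ≠ d) (hxd : ∀ k, x k ≠ d)
    (j : ℤ) : y (j + 1) = d ↔ y j = a := by
  constructor
  · intro hj
    obtain ⟨k, hk | ⟨hk, hxk⟩⟩ := h.exists_eq_or_succ_eq (j + 1)
    · exact absurd (by rw [← h.val k, hk]; exact hj) (hxd k)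
    · rw [← add_right_cancel hk, h.val, hxk]
  · intro hj
    obtain ⟨k, rfl | ⟨rfl, hxk⟩⟩ := h.exists_eq_or_succ_eq j
    · exact h.marker k (h.val k ▸ hj)
    · exact absurd (h.marker k hxk ▸ hj).symm had

theorem exists_le_ne (h : IsExpansion a d x y p) (hxd : ∀ k, x k ≠ d)
    (hx : ∀ k, ∃ i ≤ k, x i ≠ a) (j : ℤ) : ∃ i ≤ j, y i ≠ a ∧ y i ≠ d := by
  obtain ⟨k, hk⟩ := h.exists_eq_or_succ_eq j
  obtain ⟨i, hik, hxi⟩ := hx k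
  have hpi : p i ≤ p k := (strictMono_int_of_lt_succ h.lt_succ).monotone hik
  exact ⟨p i, by omega, h.val i ▸ hxi, h.val i ▸ hxd i⟩

theorem of_eventually {ι : Type*} {l : Filter ι} [l.NeBot] {xs ys : ι → Seq}
    {ps : ι → ℤ → ℤ} {c : ℤ} (hs : ∀ n, IsExpansion a d (xs n) (ys n) (ps n))
    (hx : ∀ k, ∀ᶠ n in l, xs n k = x k) (hy : ∀ j, ∀ᶠ n in l, ys n j = y j)
    (hc : ∀ᶠ n in l, ps n 0 = c) : ∃ p, p 0 = c ∧ IsExpansion a d x y p := by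
  have hconv : ∀ k, ∃ v, ∀ᶠ n in l, ps n k = v := by
    intro k
    induction k using Int.induction_on with
    | zero => exact ⟨c, hc⟩
    | succ k ih =>
      obtain ⟨v, hv⟩ := ih
      refine ⟨v + if x k = a then 2 else 1, ?_⟩
      filter_upwards [hv, hx k] with n h1 h2
      rw [(hs n).step, h1, h2]
    | pred k ih =>
      obtain ⟨v, hv⟩ := ih
      refine ⟨v - if x (-k - 1) = a then 2 else 1, ?_⟩
      filter_upwards [hv, hx (-k - 1)] with n h1 h2
      have := (hs n).step (-k - 1)
      rw [sub_add_cancel, h1, h2] at this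
      omega
  choose P hP using hconv
  refine ⟨P, ?_, fun k => ?_, fun k => ?_, fun k hk => ?_⟩
  · obtain ⟨n, h1, h2⟩ := (hc.and (hP 0)).exists
    rw [← h2, h1]
  · obtain ⟨n, h1, h2, h3⟩ := ((hP (k + 1)).and ((hP k).and (hx k))).exists
    rw [← h1, (hs n).step, h2, h3]
  · obtain ⟨n, h1, h2, h3⟩ := ((hP k).and ((hy (P k)).and (hx k))).exists
    rw [← h2, ← h1, (hs n).val, h3]
  · obtain ⟨n, h1, h2, h3⟩ := ((hP k).and ((hy (P k + 1)).and (hx k))).exists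
    rw [← h2, ← h1, (hs n).marker k (h3.trans hk)]

end IsExpansion

theorem eventually_apply_eq_of_tendsto {ι α β : Type*} [TopologicalSpace β] [DiscreteTopology β]
    {l : Filter ι} {u : ι → α → β} {v : α → β} (h : Tendsto u l (𝓝 v)) (j : α) :
    ∀ᶠ n in l, u n j = v j := by
  simpa [nhds_discrete] using tendsto_pi_nhds.1 h j

section SymbolExpansion

variable {A : Set ℕ} {X : Set Seq} {a d : ℕ}

theorem mem_symbolExpansion_of_isExpansion (hX : IsSubshift A X) {x y : Seq} {p : ℤ → ℤ}
    (hx : x ∈ X) (h : IsExpansion a d x y p) : y ∈ symbolExpansion X a d := by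
  obtain ⟨k, hk⟩ := h.exists_eq_or_succ_eq 0
  refine ⟨fun i => x (i + k), (hX.translate_mem_iff x k).2 hx,
    expandsTo_iff.2 ⟨fun i => p (i + k), ?_, h.translate k⟩⟩
  simp only [zero_add]
  omega

/-- Points of the expansion correspond to pairs `(x, p 0)` ranging over the compact set
`X ×ˢ {0, -1}`, and the expansion condition is preserved under coordinatewise limits. -/
theorem isClosed_symbolExpansion (hX : IsSubshift A X) : IsClosed (symbolExpansion X a d) := by
  refine IsSeqClosed.isClosed fun ys y hys hy => ?_
  choose xs hxs hexp using hys
  choose ps hp0 hps using fun n => expandsTo_iff.1 (hexp n)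
  have hK : IsCompact (X ×ˢ ({0, -1} : Set ℤ)) := hX.isCompact.prod (Set.toFinite _).isCompact
  obtain ⟨⟨x, c⟩, ⟨hx, hc⟩, φ, hφ, hlim⟩ :=
    hK.tendsto_subseq (x := fun n => (xs n, ps n 0)) fun n => ⟨hxs n, hp0 n⟩
  have hclim : ∀ᶠ n in atTop, ps (φ n) 0 = c := by
    simpa [nhds_discrete] using hlim.snd_nhds
  obtain ⟨p, rfl, hp⟩ := IsExpansion.of_eventually (fun n => hps (φ n))
    (eventually_apply_eq_of_tendsto hlim.fst_nhds)
    (eventually_apply_eq_of_tendsto (hy.comp hφ.tendsto_atTop)) hclim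
  exact ⟨x, hx, expandsTo_iff.2 ⟨p, hc, hp⟩⟩

theorem IsSubshift.symbolExpansion (hX : IsSubshift A X) :
    IsSubshift (A ∪ {d}) (symbolExpansion X a d) := by
  refine ⟨hX.1.union (Set.finite_singleton d), isClosed_symbolExpansion hX, fun y => ⟨?_, ?_⟩, ?_⟩
  · rintro ⟨x, hx, hexp⟩
    obtain ⟨p, -, h⟩ := expandsTo_iff.1 hexp
    exact mem_symbolExpansion_of_isExpansion hX hx h.shift
  · rintro ⟨x, hx, hexp⟩
    obtain ⟨p, -, h⟩ := expandsTo_iff.1 hexp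
    exact mem_symbolExpansion_of_isExpansion hX hx h.of_shift
  · rintro y ⟨x, hx, hexp⟩ j
    obtain ⟨p, -, h⟩ := expandsTo_iff.1 hexp
    rcases h.apply_eq_or_eq_marker j with ⟨k, hk⟩ | hd
    · exact .inl (hk ▸ hX.2.2.2 x hx k)
    · exact .inr hd

end SymbolExpansion

def collapse (a d : ℕ) (y : Seq) : Seq := fun i => if y i = d then a else y i

section Collapse

variable {a d : ℕ}

theorem continuous_collapse : Continuous (collapse a d) :=
  continuous_pi fun i =>
    (continuous_of_discreteTopology (f := fun n : ℕ => if n = d then a else n)).comp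
      (continuous_apply i)

theorem collapse_shift (y : Seq) : collapse a d (shift y) = shift (collapse a d y) := rfl

theorem collapse_of_ne {y : Seq} {i : ℤ} (h : y i ≠ d) : collapse a d y i = y i := if_neg h

theorem collapse_eq_iff {y : Seq} {i : ℤ} : collapse a d y i = a ↔ y i = a ∨ y i = d := by
  unfold collapse
  split_ifs with h <;> simp [h]

theorem eq_of_collapse_eq {y y' : Seq} (hy : ∀ j, y (j + 1) = d ↔ y j = a)
    (hy' : ∀ j, y' (j + 1) = d ↔ y' j = a) (hc : collapse a d y = collapse a d y')
    (hleft : ∀ j, ∃ i ≤ j, y i ≠ a ∧ y i ≠ d) : y = y' := by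
  have propagate : ∀ j, y j = y' j → y (j + 1) = y' (j + 1) := by
    intro j hj
    have hcj := congrFun hc (j + 1)
    by_cases h : collapse a d y (j + 1) = a
    · have h' := hcj ▸ h
      have hd_iff : y (j + 1) = d ↔ y' (j + 1) = d := by rw [hy, hy', hj]
      rw [collapse_eq_iff] at h h'
      by_cases hd : y (j + 1) = d
      · rw [hd, hd_iff.1 hd]
      · rw [h.resolve_right hd, h'.resolve_right (mt hd_iff.2 hd)]
    · have hd : y (j + 1) ≠ d := fun hd => h (collapse_eq_iff.2 (.inr hd))
      have hd' : y' (j + 1) ≠ d := fun hd' => h (hcj ▸ collapse_eq_iff.2 (.inr hd'))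
      rwa [collapse_of_ne hd, collapse_of_ne hd'] at hcj
  funext j
  obtain ⟨i, hij, hia, hid⟩ := hleft j
  have base : y i = y' i := by
    have hci := congrFun hc i
    rw [collapse_of_ne hid] at hci
    have hd' : y' i ≠ d := fun hd' => hia (hci ▸ collapse_eq_iff.2 (.inr hd'))
    rwa [collapse_of_ne hd'] at hci
  exact Int.leInduction base (fun n _ ih => propagate n ih) j hij

theorem injOn_collapse {A : Set ℕ} {X : Set Seq} (hX : IsSubshift A X) (had : a ≠ d)
    (hd : d ∉ A) (hleft : ∀ x ∈ X, ∀ k, ∃ i ≤ k, x i ≠ a) :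
    Set.InjOn (collapse a d) (symbolExpansion X a d) := by
  rintro y ⟨x, hx, hexp⟩ y' ⟨x', hx', hexp'⟩ hc
  obtain ⟨p, -, h⟩ := expandsTo_iff.1 hexp
  obtain ⟨p', -, h'⟩ := expandsTo_iff.1 hexp'
  have hxd : ∀ x ∈ X, ∀ k, x k ≠ d := fun x hx k hk => hd (hk ▸ hX.2.2.2 x hx k)
  exact eq_of_collapse_eq (h.succ_eq_marker_iff had (hxd x hx))
    (h'.succ_eq_marker_iff had (hxd x' hx')) hc (h.exists_le_ne (hxd x hx) (hleft x hx))

end Collapse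

theorem exists_le_ne_of_replicate_notMem_lang {X : Set Seq} {a N : ℕ}
    (hN : List.replicate N a ∉ lang X) {x : Seq} (hx : x ∈ X) (k : ℤ) :
    ∃ i ≤ k, x i ≠ a := by
  by_contra! h
  refine hN ⟨x, hx, k + 1 - N, ?_⟩
  rw [List.length_replicate, wordAt, List.eq_replicate_iff]
  refine ⟨List.length_ofFn, fun b hb => ?_⟩
  obtain ⟨t, rfl⟩ := List.mem_ofFn.1 hb
  exact h _ (by omega)

/-- Let `X` be a shift space over a finite alphabet `A` and
`a ∈ A`.  If `a^N ∉ B(X)` for some `N`, then `X` is flow equivalent to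
`X^{a ↦ aa}`; moreover the 1-block code fixing every letter of `A` and sending
`◇` to `a` restricts to a conjugacy from `X^{a ↦ a◇}` onto `X^{a ↦ aa}`. -/
theorem statement1 (A : Set ℕ) (X : Set Seq) (hX : IsSubshift A X)
    (a : ℕ) (ha : a ∈ A) (hN : ∃ N : ℕ, List.replicate N a ∉ lang X)
    (d : ℕ) (hd : d ∉ A) :
    FlowEquiv X ((fun y : Seq => fun i => if y i = d then a else y i) ''
        symbolExpansion X a d) ∧
      ConjugacyVia (fun y : Seq => fun i => if y i = d then a else y i)
        (symbolExpansion X a d)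
        ((fun y : Seq => fun i => if y i = d then a else y i) ''
          symbolExpansion X a d) := by
  change FlowEquiv X (collapse a d '' _) ∧ ConjugacyVia (collapse a d) _ (collapse a d '' _)
  obtain ⟨N, hN⟩ := hN
  have hY : IsSubshift (A ∪ {d}) (symbolExpansion X a d) := hX.symbolExpansion
  have hinj := injOn_collapse hX (fun h : a = d => hd (h ▸ ha)) hd
    fun x hx => exists_le_ne_of_replicate_notMem_lang hN hx
  have hconj := conjugacyVia_image_of_injOn continuous_collapse collapse_shift hY.isCompact hinj
  have hZ : IsSubshift A (collapse a d '' symbolExpansion X a d) := by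
    refine hY.image hX.1 continuous_collapse collapse_shift fun y hy i => ?_
    by_cases h : y i = d
    · simpa [collapse, h] using ha
    · rw [collapse_of_ne h]
      exact (hY.2.2.2 y hy i).resolve_right h
  exact ⟨(FlowEquiv.expand a d hX ha hd).trans (.of_conjugate ⟨_, hY⟩ ⟨A, hZ⟩ hconj.conjugate),
    hconj⟩

end SymbolicDynamics
end

section
/- Let X be a sofic shift. For each right ray x⁺ = x₁x₂x₃⋯ ∈ X⁺ there exists n ∈ ℕ such that P∞(x⁺) = P∞(x₁x₂⋯x_k) for all k ≥ n. -/
/-!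
Present `X` by a finite labelled graph `G`. A left ray `y⁻` lies in `P∞(x⁺)` iff it labels a
left-infinite path into a vertex `v` from which `x⁺` labels a right-infinite path, and it lies in
`P∞(x₁ ⋯ x_k)` iff the same holds for some right ray beginning with `x₁ ⋯ x_k` (here shift
invariance lets us move the word to the right of the origin). The sets `S_k` of vertices with a
right-infinite path beginning with `x₁ ⋯ x_k` decrease in `k`, so they are constant from some `n`
on, `G` being finite. Follower sets are compact, so a vertex lying in every `S_k` has a path
labelled `x⁺` itself; hence `S_n` also describes `P∞(x⁺)`.
-/

namespace SymbolicDynamics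

/-! ### Labelled graphs and sofic shifts -/

/-- A labelled directed graph over the ambient alphabet `ℕ`. -/
structure LGraph where
  V : Type
  E : Type
  src : E → V
  tgt : E → V
  lab : E → ℕ

namespace LGraph

/-- Biinfinite edge paths in `G`. -/
def paths (G : LGraph) : Set (ℤ → G.E) := {e | ∀ i : ℤ, G.tgt (e i) = G.src (e (i + 1))}

/-- The label sequence of a biinfinite edge path. -/
def labelMap (G : LGraph) (e : ℤ → G.E) : Seq := fun i => G.lab (e i)

/-- The shift space presented by the labelled graph `G`: label sequences of
biinfinite edge paths. -/
def presents (G : LGraph) : Set Seq := {y | ∃ e ∈ G.paths, G.labelMap e = y}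

/-- No vertex emits two distinct edges with the same label. -/
def RightResolving (G : LGraph) : Prop :=
  ∀ e f : G.E, G.src e = G.src f → G.lab e = G.lab f → e = f

/-- The graph is strongly connected (irreducible). -/
def StronglyConnected (G : LGraph) : Prop :=
  ∀ u v : G.V, Relation.ReflTransGen (fun a b => ∃ e : G.E, G.src e = a ∧ G.tgt e = b) u v

/-- The follower set of a vertex: label sequences of right-infinite paths
starting at that vertex. -/
def follower (G : LGraph) (v : G.V) : Set (ℕ → ℕ) :=
  {y | ∃ e : ℕ → G.E, G.src (e 0) = v ∧ (∀ i : ℕ, G.tgt (e i) = G.src (e (i + 1))) ∧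
    ∀ i : ℕ, y i = G.lab (e i)}

/-- Distinct vertices have distinct follower sets. -/
def FollowerSeparated (G : LGraph) : Prop :=
  ∀ u v : G.V, G.follower u = G.follower v → u = v

end LGraph

/-- A shift space is sofic iff it is presented by some finite labelled graph. -/
def IsSofic (X : Set Seq) : Prop :=
  ∃ G : LGraph, Finite G.V ∧ Finite G.E ∧ G.presents = X

/-! ### Rays and predecessor sets -/

/-- Right rays of `X`, encoded as `u : ℕ → ℕ` with `u k = x_k`. -/
def rayPlus (X : Set Seq) : Set (ℕ → ℕ) := {u | ∃ x ∈ X, ∀ k : ℕ, x (k : ℤ) = u k}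

/-- Left rays of `X`, encoded as `u : ℕ → ℕ` with `u k = x_{-(k+1)}`. -/
def rayMinus (X : Set Seq) : Set (ℕ → ℕ) :=
  {u | ∃ x ∈ X, ∀ k : ℕ, x (-((k : ℤ) + 1)) = u k}

/-- The biinfinite sequence `y⁻ x⁺` obtained by gluing a left ray `u` and a
right ray `v` at the origin. -/
def glue (u v : ℕ → ℕ) : Seq := fun i => if 0 ≤ i then v i.toNat else u (-(i + 1)).toNat

/-- The predecessor set `P∞(x⁺) = {y⁻ ∈ X⁻ : y⁻ x⁺ ∈ X}` of a right ray. -/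
def predInf (X : Set Seq) (v : ℕ → ℕ) : Set (ℕ → ℕ) := {u | glue u v ∈ X}

/-- The left ray `y⁻ w` obtained by appending the word `w` to the left ray `u`. -/
def snocWord (u : ℕ → ℕ) (w : List ℕ) : ℕ → ℕ := fun k =>
  if h : k < w.length then w.get ⟨w.length - 1 - k, by omega⟩ else u (k - w.length)

/-- The predecessor set `P∞(w) = {y⁻ ∈ X⁻ : y⁻ w ∈ X⁻}` of a word. -/
def predWord (X : Set Seq) (w : List ℕ) : Set (ℕ → ℕ) := {u | snocWord u w ∈ rayMinus X}

/-- The right ray `v x⁺` obtained by prepending the word `v` to the right ray `u`. -/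
def consRay (v : List ℕ) (u : ℕ → ℕ) : ℕ → ℕ := fun k =>
  if h : k < v.length then v.get ⟨k, h⟩ else u (k - v.length)

/-- `P_l(w)`: words `v` of length at most `l` with `v w ∈ B(X)`. -/
def predLWord (X : Set Seq) (l : ℕ) (w : List ℕ) : Set (List ℕ) :=
  {v | v ∈ lang X ∧ v.length ≤ l ∧ v ++ w ∈ lang X}

/-- `P_l(x⁺)`: words `v` of length at most `l` with `v x⁺ ∈ X⁺`. -/
def predLRay (X : Set Seq) (l : ℕ) (u : ℕ → ℕ) : Set (List ℕ) :=
  {v | v ∈ lang X ∧ v.length ≤ l ∧ consRay v u ∈ rayPlus X}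

/-- The edge relation of the past set cover of `X`: an edge labelled `a` from
`P` to `P'` whenever there is a nonempty word `w ∈ B(X)` with `a w ∈ B(X)`,
`P = P∞(a w)` and `P' = P∞(w)`. -/
def pscEdge (X : Set Seq) (P P' : Set (ℕ → ℕ)) : Prop :=
  ∃ (a : ℕ) (w : List ℕ), w ≠ [] ∧ w ∈ lang X ∧ (a :: w) ∈ lang X ∧
    P = predWord X (a :: w) ∧ P' = predWord X w

/-- The vertex set of the maximal essential subgraph of the past set cover: the
vertices lying on a biinfinite path in the past set cover. -/
def pscEssential (X : Set Seq) : Set (Set (ℕ → ℕ)) :=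
  {P | ∃ Q : ℤ → Set (ℕ → ℕ), Q 0 = P ∧ ∀ i : ℤ, pscEdge X (Q i) (Q (i + 1))}

/-- Condition (∗) of Carlsen and Matsumoto. -/
def ConditionStar (X : Set Seq) : Prop :=
  ∀ (l : ℕ) (F : Set (List ℕ)), F.Infinite → F ⊆ lang X →
    (∀ u ∈ F, ∀ v ∈ F, predLWord X l u = predLWord X l v) →
    ∃ u ∈ rayPlus X, ∀ w ∈ F, predLWord X l w = predLRay X l u

theorem glue_snocWord (l : ℕ → ℕ) (w : List ℕ) (r : ℕ → ℕ) :
    glue (snocWord l w) r = fun i => glue l (consRay w r) (i + w.length) := by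
  funext i
  by_cases hi : 0 ≤ i
  · simp only [glue, if_pos hi, if_pos (show 0 ≤ i + w.length by omega), consRay]
    rw [dif_neg (by omega)]
    congr 1; omega
  · simp only [glue, if_neg hi, snocWord]
    by_cases hk : (-(i + 1)).toNat < w.length
    · rw [dif_pos hk, if_pos (by omega), consRay, dif_pos (by omega)]
      congr 1; ext; dsimp only; omega
    · rw [dif_neg hk, if_neg (by omega)]
      congr 1; omega

theorem mem_rayMinus_iff_exists_glue_mem (X : Set Seq) (l : ℕ → ℕ) :
    l ∈ rayMinus X ↔ ∃ r, glue l r ∈ X := by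
  constructor
  · rintro ⟨x, hx, hxl⟩
    refine ⟨fun k => x k, ?_⟩
    convert hx using 1
    funext i
    by_cases hi : 0 ≤ i
    · simp only [glue, if_pos hi]; congr 1; omega
    · simp only [glue, if_neg hi, ← hxl]; congr 1; omega
  · rintro ⟨r, hr⟩
    refine ⟨_, hr, fun k => ?_⟩
    simp only [glue, if_neg (show ¬ (0 : ℤ) ≤ -((k : ℤ) + 1) by omega)]
    congr 1; omega

theorem consRay_ofFn_mem_cylinder (u r : ℕ → ℕ) (k : ℕ) :
    consRay (List.ofFn fun i : Fin k => u i) r ∈ PiNat.cylinder u k := fun i hi => by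
  simp [consRay, hi]

theorem eq_consRay_ofFn_of_mem_cylinder {u y : ℕ → ℕ} {k : ℕ} (hy : y ∈ PiNat.cylinder u k) :
    y = consRay (List.ofFn fun i : Fin k => u i) (fun i => y (i + k)) := by
  funext i
  by_cases hi : i < k
  · simp [consRay, hi, hy i hi]
  · simp only [consRay, List.length_ofFn, dif_neg hi]; congr 1; omega

theorem mem_predWord_iff_exists_consRay {X : Set Seq}
    (hX : ∀ x ∈ X, ∀ j : ℤ, (fun i => x (i + j)) ∈ X) (w : List ℕ) (l : ℕ → ℕ) :
    l ∈ predWord X w ↔ ∃ r, l ∈ predInf X (consRay w r) := by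
  simp only [predWord, predInf, Set.mem_ofPred_eq, mem_rayMinus_iff_exists_glue_mem,
    glue_snocWord]
  refine exists_congr fun r => ⟨fun h => ?_, fun h => hX _ h _⟩
  simpa using hX _ h (-w.length)

theorem _root_.PiNat.mem_of_isClosed_of_forall_inter_cylinder_nonempty {E : ℕ → Type*}
    [∀ n, TopologicalSpace (E n)] [∀ n, DiscreteTopology (E n)] {s : Set (∀ n, E n)}
    (hs : IsClosed s) {x : ∀ n, E n} (h : ∀ n, (s ∩ PiNat.cylinder x n).Nonempty) : x ∈ s := by
  rw [← hs.closure_eq, (PiNat.isTopologicalBasis_cylinders E).mem_closure_iff]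
  rintro _ ⟨y, n, rfl⟩ hx
  rw [← PiNat.mem_cylinder_iff_eq.1 hx, Set.inter_comm]
  exact h n

namespace LGraph

variable (G : LGraph)

/-- Labels of left-infinite paths into `v`, read backwards from `v` as in `rayMinus`. -/
def past (v : G.V) : Set (ℕ → ℕ) :=
  {y | ∃ g : ℕ → G.E, G.tgt (g 0) = v ∧ (∀ m : ℕ, G.tgt (g (m + 1)) = G.src (g m)) ∧
    ∀ m : ℕ, y m = G.lab (g m)}

theorem translate_mem_presents {x : Seq} (hx : x ∈ G.presents) (j : ℤ) :
    (fun i => x (i + j)) ∈ G.presents := by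
  obtain ⟨e, he, rfl⟩ := hx
  refine ⟨fun i => e (i + j), fun i => ?_, rfl⟩
  simpa only [add_right_comm i 1 j] using he (i + j)

theorem glue_mem_presents_iff (l r : ℕ → ℕ) :
    glue l r ∈ G.presents ↔ ∃ v, l ∈ G.past v ∧ r ∈ G.follower v := by
  constructor
  · rintro ⟨e, he, hel⟩
    refine ⟨G.src (e 0), ⟨fun m => e (-((m : ℤ) + 1)), ?_, fun m => ?_, fun m => ?_⟩,
      ⟨fun i => e i, rfl, fun i => by simpa using he i, fun i => ?_⟩⟩
    · simpa using he (-1)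
    · convert he (-((m : ℤ) + 2)) using 3 <;> push_cast <;> ring_nf
    · have h := congrFun hel (-((m : ℤ) + 1))
      simp only [labelMap, glue, if_neg (show ¬ (0 : ℤ) ≤ -((m : ℤ) + 1) by omega)] at h
      rw [h]; congr 1; omega
    · simpa [labelMap, glue] using (congrFun hel i).symm
  · rintro ⟨v, ⟨g, hg0, hg, hgl⟩, ⟨e, he0, he, hel⟩⟩
    refine ⟨fun i => if 0 ≤ i then e i.toNat else g (-(i + 1)).toNat, fun i => ?_, ?_⟩
    · by_cases hi : 0 ≤ i
      · simp only [if_pos hi, if_pos (show 0 ≤ i + 1 by omega)]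
        rw [show (i + 1).toNat = i.toNat + 1 by omega]; exact he _
      · by_cases hi' : 0 ≤ i + 1
        · simp only [if_neg hi, if_pos hi']
          rw [show (-(i + 1)).toNat = 0 by omega, show (i + 1).toNat = 0 by omega, hg0, he0]
        · simp only [if_neg hi, if_neg hi']
          rw [show (-(i + 1)).toNat = (-(i + 1 + 1)).toNat + 1 by omega]; exact hg _
    · funext i
      by_cases hi : 0 ≤ i
      · simp [labelMap, glue, hi, hel]
      · simp [labelMap, glue, hi, hgl]

theorem isCompact_follower [Finite G.E] (v : G.V) : IsCompact (G.follower v) := by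
  let _ : TopologicalSpace G.E := ⊥
  have _ : DiscreteTopology G.E := ⟨rfl⟩
  let _ : TopologicalSpace G.V := ⊥
  have _ : DiscreteTopology G.V := ⟨rfl⟩
  have hpaths : IsClosed ({e : ℕ → G.E | G.src (e 0) = v} ∩
      ⋂ i, {e | G.tgt (e i) = G.src (e (i + 1))}) :=
    (isClosed_eq (continuous_of_discreteTopology.comp (continuous_apply 0)) continuous_const).inter
      (isClosed_iInter fun i => isClosed_eq
        (continuous_of_discreteTopology.comp (continuous_apply i))
        (continuous_of_discreteTopology.comp (continuous_apply (i + 1))))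
  have hlab : Continuous fun (e : ℕ → G.E) i => G.lab (e i) :=
    continuous_pi fun i => continuous_of_discreteTopology.comp (continuous_apply i)
  convert hpaths.isCompact.image hlab using 1
  ext y
  simp only [follower, Set.mem_image, Set.mem_inter_iff, Set.mem_iInter, Set.mem_ofPred_eq]
  constructor
  · rintro ⟨e, he0, he, hel⟩; exact ⟨e, ⟨he0, he⟩, funext fun i => (hel i).symm⟩
  · rintro ⟨e, ⟨he0, he⟩, rfl⟩; exact ⟨e, he0, he, fun i => rfl⟩

theorem predInf_presents (r : ℕ → ℕ) :
    predInf G.presents r = {l | ∃ v, l ∈ G.past v ∧ r ∈ G.follower v} :=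
  Set.ext fun l => G.glue_mem_presents_iff l r

theorem predWord_presents_ofFn (u : ℕ → ℕ) (k : ℕ) :
    predWord G.presents (List.ofFn fun i : Fin k => u i) =
      {l | ∃ v, l ∈ G.past v ∧ (G.follower v ∩ PiNat.cylinder u k).Nonempty} := by
  ext l
  simp only [mem_predWord_iff_exists_consRay (fun _ hx j => G.translate_mem_presents hx j),
    predInf_presents, Set.mem_ofPred_eq]
  constructor
  · rintro ⟨r, v, hl, hr⟩
    exact ⟨v, hl, _, hr, consRay_ofFn_mem_cylinder u r k⟩
  · rintro ⟨v, hl, y, hy, hyu⟩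
    exact ⟨_, v, hl, eq_consRay_ofFn_of_mem_cylinder hyu ▸ hy⟩

theorem mem_follower_iff_forall_inter_cylinder_nonempty [Finite G.E] (v : G.V) (u : ℕ → ℕ) :
    u ∈ G.follower v ↔ ∀ k, (G.follower v ∩ PiNat.cylinder u k).Nonempty :=
  ⟨fun hu k => ⟨u, hu, PiNat.self_mem_cylinder u k⟩,
    PiNat.mem_of_isClosed_of_forall_inter_cylinder_nonempty (G.isCompact_follower v).isClosed⟩

end LGraph

theorem statement8_general (X : Set Seq) (hX : IsSofic X)
    (u : ℕ → ℕ) :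
    ∃ n : ℕ, ∀ k : ℕ, n ≤ k →
      predInf X u = predWord X (List.ofFn fun idx : Fin k => u (idx : ℕ)) := by
  obtain ⟨G, _, _, rfl⟩ := hX
  set S : ℕ → Set G.V := fun k => {v | (G.follower v ∩ PiNat.cylinder u k).Nonempty}
  have hS : Antitone S := fun j k hjk v ⟨y, hy, hyu⟩ => ⟨y, hy, PiNat.cylinder_anti u hjk hyu⟩
  obtain ⟨n, hn⟩ := WellFoundedLT.antitone_chain_condition hS
  have hSn : {v | u ∈ G.follower v} = S n := by
    ext v
    rw [Set.mem_ofPred_eq, G.mem_follower_iff_forall_inter_cylinder_nonempty]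
    refine ⟨fun hv => hv n, fun hv k => ?_⟩
    rcases le_total n k with hk | hk
    · exact (hn k hk).subset hv
    · exact hS hk hv
  refine ⟨n, fun k hk => ?_⟩
  rw [G.predInf_presents, G.predWord_presents_ofFn]
  ext l
  exact exists_congr fun v => and_congr_right' (Set.ext_iff.1 (hSn.trans (hn k hk)) v)

/-- Let `X` be a sofic shift.  For each right ray
`x⁺ = x₁x₂x₃⋯ ∈ X⁺` there exists `n` such that `P∞(x⁺) = P∞(x₁ ⋯ x_k)` for all
`k ≥ n`. -/
theorem statement8 (X : Set Seq) (hX : IsSofic X)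
    (u : ℕ → ℕ) (hu : u ∈ rayPlus X) :
    ∃ n : ℕ, ∀ k : ℕ, n ≤ k →
      predInf X u = predWord X (List.ofFn fun idx : Fin k => u (idx : ℕ)) :=
  statement8_general X hX u

end SymbolicDynamics
end
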